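/- arXiv:2209.15353 — 3 statements merged into one kernel-verified Lean document; each statement's English description precedes it below -/
import Mathlib

section
/- Let A be a discrete valuation ring with maximal ideal m, fraction field K, and residue field k = A/m. Let M be a B-submodule of K with B = A (i.e., M is an A-submodule of K). If M ⊗_A k ≠ 0, then M is isomorphic to A as an A-module; conversely if M ≅ A then M ⊗_A k ≠ 0. -/
/-! By the base change `(A ⧸ 𝔪) ⊗ M ≅ M ⧸ 𝔪M`, a nonzero reduction provides some `x ∈ M \ 𝔪M`.
Over a valuation ring, of any two elements of `K` one is an `A`-multiple of the other, and
`x ∉ 𝔪M` forces every `y ∈ M` dividing `x` to do so up to a unit, so `M = A x ≅ A`. -/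

open TensorProduct IsLocalRing

theorem Submodule.nontrivial_quotient_tensor_iff_not_le_smul {R M : Type*} [CommRing R]
    [AddCommGroup M] [Module R M] (I : Ideal R) (N : Submodule R M) :
    Nontrivial ((R ⧸ I) ⊗[R] N) ↔ ¬N ≤ I • N := by
  rw [(quotTensorEquivQuotSMul N I).toEquiv.nontrivial_congr, ← not_subsingleton_iff_nontrivial,
    Submodule.Quotient.subsingleton_iff, eq_top_iff, not_iff_not]
  exact ⟨fun h x hx ↦ (mem_smul_top_iff I N ⟨x, hx⟩).mp (h trivial),
    fun h x _ ↦ (mem_smul_top_iff I N x).mpr (h x.2)⟩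

namespace ValuationRing

variable {A K : Type*} [CommRing A] [IsDomain A] [ValuationRing A] [Field K] [Algebra A K]
  [IsFractionRing A K]

theorem mem_span_singleton_or_mem_span_singleton (x y : K) :
    y ∈ A ∙ x ∨ x ∈ A ∙ y := by
  simp only [Submodule.mem_span_singleton]
  rcases eq_or_ne x 0 with rfl | hx
  · exact Or.inr ⟨0, zero_smul A y⟩
  rcases eq_or_ne y 0 with rfl | hy
  · exact Or.inl ⟨0, zero_smul A x⟩
  obtain ⟨c, hc⟩ | ⟨c, hc⟩ := isInteger_or_isInteger A (y / x)
  · exact Or.inl ⟨c, by rw [Algebra.smul_def, hc, div_mul_cancel₀ y hx]⟩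
  · exact Or.inr ⟨c, by rw [Algebra.smul_def, hc, inv_div, div_mul_cancel₀ x hy]⟩

theorem eq_span_singleton_of_notMem_maximalIdeal_smul {M : Submodule A K} {x : K}
    (hxM : x ∈ M) (hx : x ∉ maximalIdeal A • M) : M = A ∙ x := by
  refine le_antisymm (fun y hy ↦ ?_) ((Submodule.span_singleton_le_iff_mem x M).mpr hxM)
  rcases mem_span_singleton_or_mem_span_singleton (A := A) x y with hyx | hxy
  · exact hyx
  obtain ⟨c, rfl⟩ := Submodule.mem_span_singleton.mp hxy
  have hc : IsUnit c := by
    by_contra hc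
    exact hx (Submodule.smul_mem_smul hc hy)
  obtain ⟨u, rfl⟩ := hc
  exact (Submodule.smul_mem_iff' _ u).mp (Submodule.mem_span_singleton_self _)

end ValuationRing

/-- over a DVR `A` with fraction field `K` and residue field `k`, an `A`-submodule
`M` of `K` is isomorphic to `A` if and only if its reduction `k ⊗_A M` is nonzero. -/
theorem submodule_of_fractionField_free_iff_reduction_nonzero
    {A : Type*} [CommRing A] [IsDomain A] [IsDiscreteValuationRing A]
    (M : Submodule A (FractionRing A)) :
    Nonempty (↥M ≃ₗ[A] A) ↔ Nontrivial (IsLocalRing.ResidueField A ⊗[A] ↥M) := by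
  constructor
  · rintro ⟨e⟩
    exact (e.lTensor (ResidueField A) ≪≫ₗ TensorProduct.rid A _).toEquiv.nontrivial
  · intro h
    obtain ⟨x, hxM, hx⟩ := Set.not_subset.mp <|
      (Submodule.nontrivial_quotient_tensor_iff_not_le_smul (maximalIdeal A) M).mp h
    have hx0 : x ≠ 0 := fun h0 ↦ hx (h0 ▸ zero_mem _)
    rw [ValuationRing.eq_span_singleton_of_notMem_maximalIdeal_smul hxM hx]
    exact ⟨(LinearEquiv.toSpanNonzeroSingleton A _ x hx0).symm⟩
end

section
/- Let G be a group, N a normal subgroup of a subgroup H ≤ G with H/N finite (or N of finite index in H), and let χ : H → Rˣ be a character over a commutative ring R in which #(H/N) is invertible. Let ind_N^G(χ|_N) and ind_H^G(χ) denote the spaces of functions f : G → R satisfying f(ng) = χ(n)f(g) (resp. f(hg) = χ(h)f(g)) that are supported on finitely many right cosets. Then the averaging map (q f)(g) = #(H/N)⁻¹ ∑_{h ∈ N\H} χ(h)⁻¹ f(hg) is a well-defined surjective R[G]-module homomorphism from ind_N^G(χ|_N) onto ind_H^G(χ), where G acts by right translation. -/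
/-- The compactly induced representation `ind_H^G(χ)` in the discrete-group model: functions
`f : G → R` with `f (h * g) = χ h * f g` supported on finitely many right cosets of `H`. -/
def Ind {G : Type*} (R : Type*) [Group G] [CommRing R] (H : Subgroup G) (χ : ↥H →* Rˣ) :
    Submodule R (G → R) where
  carrier := {f | (∀ (h : ↥H) (g : G), f (↑h * g) = (χ h : R) * f g) ∧
    ∃ S : Finset G, ∀ g, f g ≠ 0 → ∃ s ∈ S, ∃ h : ↥H, g = ↑h * s}
  add_mem' := by
    classical
    rintro f g ⟨hf1, Sf, hf2⟩ ⟨hg1, Sg, hg2⟩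
    refine ⟨fun h x => by simp [hf1 h x, hg1 h x, mul_add], Sf ∪ Sg, ?_⟩
    intro x hx
    by_cases h : f x ≠ 0
    · obtain ⟨s, hs, h'⟩ := hf2 x h
      exact ⟨s, Finset.mem_union_left _ hs, h'⟩
    · push_neg at h
      have hgx : g x ≠ 0 := by
        intro hg0
        apply hx
        simp [Pi.add_apply, h, hg0]
      obtain ⟨s, hs, h'⟩ := hg2 x hgx
      exact ⟨s, Finset.mem_union_right _ hs, h'⟩
  zero_mem' := ⟨fun h g => by simp, ∅, fun g hg => absurd rfl hg⟩
  smul_mem' := by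
    rintro c f ⟨hf1, S, hf2⟩
    refine ⟨fun h g => by simp [hf1 h g]; ring, S, ?_⟩
    intro g hg
    apply hf2
    intro h0
    apply hg
    simp [h0]

/-- for `N ⊴ H ≤ G` with finite index `[H:N]` invertible in `R`, the averaging
map `(q f)(g) = #(H/N)⁻¹ ∑_{h ∈ N\H} χ(h)⁻¹ f(hg)` (sum over a set `S` of representatives of
the right cosets of `N` in `H`) is a well-defined surjective `R[G]`-module homomorphism from
`ind_N^G(χ|_N)` onto `ind_H^G(χ)`, where `G` acts by right translation. -/
theorem averaging_map_surjective
    {G R : Type*} [Group G] [CommRing R] (N H : Subgroup G) (hNH : N ≤ H)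
    (hnorm : (N.subgroupOf H).Normal)
    (χ : ↥H →* Rˣ) (S : Finset ↥H)
    (hS : ∀ h : ↥H, ∃! s : ↥H, s ∈ S ∧ ∃ n ∈ N, (h : G) = n * ↑s)
    (hinv : IsUnit ((S.card : R)))
    (q : (G → R) → (G → R))
    (hq : ∀ f g, q f g = Ring.inverse ((S.card : R)) *
      ∑ s ∈ S, (((χ s)⁻¹ : Rˣ) : R) * f (↑s * g)) :
    (∀ f ∈ Ind R N (χ.comp (Subgroup.inclusion hNH)), q f ∈ Ind R H χ) ∧
    (∀ f f' : G → R, q (f + f') = q f + q f') ∧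
    (∀ (c : R) (f : G → R), q (c • f) = c • q f) ∧
    (∀ (x : G), ∀ f ∈ Ind R N (χ.comp (Subgroup.inclusion hNH)),
        q (fun g => f (g * x)) = fun g => q f (g * x)) ∧
    (∀ φ ∈ Ind R H χ, ∃ f ∈ Ind R N (χ.comp (Subgroup.inclusion hNH)), q f = φ) := by
  classical
  -- representative function
  set σ : ↥H → ↥H := fun x => (hS x).choose with hσdef
  have hσS : ∀ x : ↥H, σ x ∈ S := fun x => (hS x).choose_spec.1.1
  have hσrep : ∀ x : ↥H, ∃ n ∈ N, (x : G) = ↑n * ↑(σ x) := fun x => (hS x).choose_spec.1.2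
  have hσuniq : ∀ (x t : ↥H), t ∈ S → (∃ n ∈ N, (x : G) = ↑n * ↑t) → t = σ x :=
    fun x t ht hn => (hS x).choose_spec.2 t ⟨ht, hn⟩
  -- the key bijection fact
  have hback : ∀ (h : ↥H), ∀ s ∈ S, σ (σ (s * h) * h⁻¹) = s := by
    intro h s hsS
    obtain ⟨n, hn, hns⟩ := hσrep (s * h)
    have hns' : (↑s : G) * ↑h = ↑n * ↑(σ (s * h)) := by
      rw [← Subgroup.coe_mul]; exact hns
    refine (hσuniq (σ (s * h) * h⁻¹) s hsS ⟨n⁻¹, N.inv_mem hn, ?_⟩).symm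
    have : (↑(σ (s * h)) : G) = n⁻¹ * (↑s * ↑h) := by
      rw [hns', ← mul_assoc, inv_mul_cancel, one_mul]
    push_cast
    rw [this]
    group
  -- equivariance of q f for f in Ind N
  have hmain : ∀ f : G → R,
      (∀ (n : ↥N) (g : G), f (↑n * g) = ((χ.comp (Subgroup.inclusion hNH)) n : R) * f g) →
      ∀ (h : ↥H) (g : G), q f (↑h * g) = (χ h : R) * q f g := by
    intro f hf1 h g
    rw [hq, hq]
    have hterm : ∀ s ∈ S, (((χ s)⁻¹ : Rˣ) : R) * f (↑s * (↑h * g)) =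
        (χ h : R) * ((((χ (σ (s * h)))⁻¹ : Rˣ) : R) * f (↑(σ (s * h)) * g)) := by
      intro s hsS
      obtain ⟨n, hn, hns⟩ := hσrep (s * h)
      set t := σ (s * h) with ht
      set n' : ↥H := Subgroup.inclusion hNH ⟨n, hn⟩ with hn'def
      have ecoe : (↑n' : G) = n := rfl
      have hns2 : (↑s : G) * ↑h = n * ↑t := by
        rw [← Subgroup.coe_mul]; exact hns
      have e : s * h = n' * t := by
        apply Subtype.ext
        rw [Subgroup.coe_mul, Subgroup.coe_mul, ecoe]
        exact hns2
      have hfval : f (↑s * (↑h * g)) = (χ n' : R) * f (↑t * g) := by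
        have harg : (↑s : G) * (↑h * g) = ↑(⟨n, hn⟩ : ↥N) * (↑t * g) := by
          show (↑s : G) * (↑h * g) = n * (↑t * g)
          rw [← mul_assoc, ← mul_assoc, hns2]
        rw [harg, hf1 ⟨n, hn⟩ (↑t * g)]
        rfl
      have e3 : ((χ s)⁻¹ : Rˣ) * χ n' = χ h * (χ t)⁻¹ := by
        have e2 : χ s * χ h = χ n' * χ t := by rw [← map_mul, ← map_mul, e]
        have : χ n' = χ s * χ h * (χ t)⁻¹ := by
          rw [eq_mul_inv_iff_mul_eq]; exact e2.symm
        rw [this]; group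
      have e3' : (((χ s)⁻¹ : Rˣ) : R) * (χ n' : R) = (χ h : R) * (((χ t)⁻¹ : Rˣ) : R) := by
        have := congrArg Units.val e3
        simpa using this
      calc (((χ s)⁻¹ : Rˣ) : R) * f (↑s * (↑h * g))
          = ((((χ s)⁻¹ : Rˣ) : R) * (χ n' : R)) * f (↑t * g) := by
            rw [hfval, mul_assoc]
        _ = ((χ h : R) * (((χ t)⁻¹ : Rˣ) : R)) * f (↑t * g) := by rw [e3']
        _ = (χ h : R) * ((((χ t)⁻¹ : Rˣ) : R) * f (↑t * g)) := by rw [mul_assoc]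
    have hsum : ∑ s ∈ S, (((χ s)⁻¹ : Rˣ) : R) * f (↑s * (↑h * g)) =
        (χ h : R) * ∑ s ∈ S, (((χ s)⁻¹ : Rˣ) : R) * f (↑s * g) := by
      rw [Finset.sum_congr rfl hterm, ← Finset.mul_sum]
      congr 1
      refine Finset.sum_nbij' (fun s => σ (s * h)) (fun t => σ (t * h⁻¹)) ?_ ?_ ?_ ?_ ?_
      · intro s _; exact hσS _
      · intro t _; exact hσS _
      · intro s hs; exact hback h s hs
      · intro t ht
        have := hback h⁻¹ t ht
        simpa using this
      · intro s _; rfl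
    rw [hsum, ← mul_assoc, mul_comm (Ring.inverse ((S.card : R))) ((χ h : R)), mul_assoc]
  refine ⟨?_, ?_, ?_, ?_, ?_⟩
  · -- q maps Ind N into Ind H
    rintro f ⟨hf1, Sf, hf2⟩
    refine ⟨hmain f hf1, Sf, ?_⟩
    intro g hg
    rw [hq] at hg
    have : ∃ s ∈ S, f (↑s * g) ≠ 0 := by
      by_contra hcon
      push_neg at hcon
      apply hg
      rw [Finset.sum_eq_zero fun s hs => by rw [hcon s hs, mul_zero], mul_zero]
    obtain ⟨s, hsS, hfs⟩ := this
    obtain ⟨t, htSf, n, hgn⟩ := hf2 (↑s * g) hfs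
    refine ⟨t, htSf, s⁻¹ * ⟨↑n, hNH n.2⟩, ?_⟩
    have : (↑s : G) * g = ↑n * t := hgn
    rw [Subgroup.coe_mul]
    show g = ↑s⁻¹ * ↑(⟨(↑n : G), hNH n.2⟩ : ↥H) * t
    have hcoe : (↑(⟨(↑n : G), hNH n.2⟩ : ↥H) : G) = ↑n := rfl
    rw [hcoe, Subgroup.coe_inv, mul_assoc, ← this, ← mul_assoc, inv_mul_cancel, one_mul]
  · -- additivity
    intro f f'
    funext g
    simp only [hq, Pi.add_apply, mul_add, Finset.sum_add_distrib]
  · -- R-linearity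
    intro c f
    funext g
    simp only [hq, Pi.smul_apply, smul_eq_mul]
    rw [show (∑ s ∈ S, (((χ s)⁻¹ : Rˣ) : R) * (c * f (↑s * g))) =
        c * ∑ s ∈ S, (((χ s)⁻¹ : Rˣ) : R) * f (↑s * g) from by
      rw [Finset.mul_sum]; exact Finset.sum_congr rfl fun s _ => by ring]
    ring
  · -- G-equivariance
    intro x f _
    funext g
    simp only [hq, mul_assoc]
  · -- surjectivity
    rintro φ ⟨hφ1, Sφ, hφ2⟩
    refine ⟨φ, ⟨?_, ?_⟩, ?_⟩
    · intro n g
      have := hφ1 (Subgroup.inclusion hNH n) g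
      simpa using this
    · refine ⟨(S ×ˢ Sφ).image fun p => ((↑p.1 : G) * p.2), ?_⟩
      intro g hg
      obtain ⟨s, hsSφ, h, rfl⟩ := hφ2 g hg
      obtain ⟨n, hn, hns⟩ := hσrep h
      refine ⟨↑(σ h) * s, Finset.mem_image.mpr ⟨(σ h, s), Finset.mem_product.mpr ⟨hσS h, hsSφ⟩, rfl⟩,
        (⟨n, hn⟩ : ↥N), ?_⟩
      have hcoe : (↑(⟨n, hn⟩ : ↥N) : G) = n := rfl
      rw [hcoe, ← mul_assoc, ← hns]
    · funext g
      rw [hq]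
      have : ∀ s ∈ S, (((χ s)⁻¹ : Rˣ) : R) * φ (↑s * g) = φ g := by
        intro s _
        rw [hφ1 s g, ← mul_assoc]
        norm_cast
        rw [inv_mul_cancel, Units.val_one, one_mul]
      rw [Finset.sum_congr rfl this, Finset.sum_const, nsmul_eq_mul, ← mul_assoc,
        Ring.inverse_mul_cancel _ hinv, one_mul]
end

section
/- Let G be a group, N ⊴ H ≤ G with [H:N] finite and invertible in the field R, χ : H → Rˣ a character. With the averaging map q : ind_N^G(χ|_N) → ind_H^G(χ) as above, the kernel of q equals the (λ, χ⁻¹)-augmentation submodule for the left H-action (λ(h)f)(g) = f(h⁻¹g): that is, ker q = ⟨λ(h)f − χ(h)⁻¹ f : h ∈ H, f ∈ ind_N^G(χ|_N)⟩, so q induces an isomorphism of the χ⁻¹-coinvariants (ind_N^G(χ|_N))_{λ,χ⁻¹} ≅ ind_H^G(χ). -/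
/-- The `(λ, χ⁻¹)`-augmentation submodule of `ind_N^G(χ|_N)` for the left translation action
`(λ(h) f)(g) = f (h⁻¹ g)` of `H`: it is spanned by the elements `λ(h) f − χ(h)⁻¹ f`. -/
def leftAugmentation {G R : Type*} [Group G] [CommRing R] (N H : Subgroup G) (hNH : N ≤ H)
    (χ : ↥H →* Rˣ) : Submodule R (G → R) :=
  Submodule.span R {x : G → R | ∃ (h : ↥H) (f : G → R),
    f ∈ Ind R N (χ.comp (Subgroup.inclusion hNH)) ∧
    x = (fun g => f ((h : G)⁻¹ * g)) - (((χ h)⁻¹ : Rˣ) : R) • f}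

namespace Subgroup.IsComplement

variable {Γ M : Type*} [Group Γ] {K : Subgroup Γ} {T : Finset Γ} {φ : Γ → M}

theorem apply_toRightFun (hT : IsComplement (K : Set Γ) T) (hφ : ∀ k ∈ K, ∀ x, φ (k * x) = φ x)
    (x : Γ) : φ (hT.toRightFun x) = φ x := by
  simpa using hφ _ (hT.toRightFun_mul_inv_mem x) x

theorem sum_comp_equiv [AddCommMonoid M] (hT : IsComplement (K : Set Γ) T)
    (hφ : ∀ k ∈ K, ∀ x, φ (k * x) = φ x) (e : Γ ≃ Γ) (he : ∀ x y, y * x⁻¹ ∈ K ↔ e y * (e x)⁻¹ ∈ K) :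
    ∑ t ∈ T, φ (e t) = ∑ t ∈ T, φ t := by
  let σ : T ≃ T := hT.rightQuotientEquiv.symm.trans <|
    (Quotient.congr e fun x y => by simpa only [QuotientGroup.rightRel_apply] using he x y).trans
      hT.rightQuotientEquiv
  rw [← Finset.sum_coe_sort T, ← Finset.sum_coe_sort T]
  exact Fintype.sum_equiv σ _ _ fun t => (hT.apply_toRightFun hφ (e t)).symm

theorem sum_comp_mul_right [AddCommMonoid M] (hT : IsComplement (K : Set Γ) T)
    (hφ : ∀ k ∈ K, ∀ x, φ (k * x) = φ x) (w : Γ) :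
    ∑ t ∈ T, φ (t * w) = ∑ t ∈ T, φ t :=
  hT.sum_comp_equiv hφ (Equiv.mulRight w) fun x y => by simp [mul_assoc]

theorem sum_comp_mul_left [AddCommMonoid M] [K.Normal] (hT : IsComplement (K : Set Γ) T)
    (hφ : ∀ k ∈ K, ∀ x, φ (k * x) = φ x) (w : Γ) :
    ∑ t ∈ T, φ (w * t) = ∑ t ∈ T, φ t :=
  hT.sum_comp_equiv hφ (Equiv.mulLeft w) fun x y => by
    rw [Equiv.coe_mulLeft, mul_inv_rev, ← mul_assoc, ‹K.Normal›.mem_comm_iff (a := w * y * x⁻¹)]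
    simp [mul_assoc]

end Subgroup.IsComplement

section Averaging

variable {G R : Type*} [Group G] [Field R] {N H : Subgroup G}

noncomputable def averaging (χ : ↥H →* Rˣ) (S : Finset ↥H) : (G → R) →ₗ[R] (G → R) where
  toFun f g := (S.card : R)⁻¹ * ∑ s ∈ S, (((χ s)⁻¹ : Rˣ) : R) * f (↑s * g)
  map_add' f f' := by
    ext g
    simp only [Pi.add_apply, mul_add, Finset.sum_add_distrib]
  map_smul' c f := by
    ext g
    simp only [Pi.smul_apply, smul_eq_mul, RingHom.id_apply, Finset.mul_sum]
    exact Finset.sum_congr rfl fun s _ => by ring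

theorem averaging_apply (χ : ↥H →* Rˣ) (S : Finset ↥H) (f : G → R) (g : G) :
    averaging χ S f g = (S.card : R)⁻¹ * ∑ s ∈ S, (((χ s)⁻¹ : Rˣ) : R) * f (↑s * g) :=
  rfl

theorem averaging_eq_self_of_mem_ind {χ : ↥H →* Rˣ} {S : Finset ↥H} (hcard : (S.card : R) ≠ 0)
    {F : G → R} (hF : F ∈ Ind R H χ) : averaging χ S F = F := by
  ext g
  have hterm : ∀ s ∈ S, (((χ s)⁻¹ : Rˣ) : R) * F (↑s * g) = F g := fun s _ => by
    rw [hF.1 s g, ← mul_assoc, ← Units.val_mul, inv_mul_cancel, Units.val_one, one_mul]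
  rw [averaging_apply, Finset.sum_congr rfl hterm, Finset.sum_const, nsmul_eq_mul,
    inv_mul_cancel_left₀ hcard]

theorem isComplement_subgroupOf_of_existsUnique {S : Finset ↥H}
    (hS : ∀ h : ↥H, ∃! s : ↥H, s ∈ S ∧ ∃ n ∈ N, (h : G) = n * ↑s) :
    Subgroup.IsComplement (N.subgroupOf H : Set ↥H) (S : Set ↥H) := by
  refine Subgroup.isComplement_iff_existsUnique_mul_inv_mem.2 fun h => ?_
  obtain ⟨s, ⟨hs, n, hn, hhs⟩, huniq⟩ := hS h
  refine ⟨⟨s, hs⟩, by simpa [Subgroup.mem_subgroupOf, hhs] using hn, fun t ht => Subtype.ext ?_⟩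
  exact huniq t ⟨t.2, _, Subgroup.mem_subgroupOf.1 ht, by simp⟩

variable (hNH : N ≤ H) {χ : ↥H →* Rˣ} {S : Finset ↥H}
include hNH

theorem inv_char_mul_apply_mul_of_mem_ind {f : G → R}
    (hf : f ∈ Ind R N (χ.comp (Subgroup.inclusion hNH))) (g : G) :
    ∀ k ∈ N.subgroupOf H, ∀ u : ↥H,
      (((χ (k * u))⁻¹ : Rˣ) : R) * f (↑(k * u) * g) = (((χ u)⁻¹ : Rˣ) : R) * f (↑u * g) := by
  intro k hk u
  have hfk : f (↑k * (↑u * g)) = (χ k : R) * f (↑u * g) := hf.1 ⟨k, hk⟩ (↑u * g)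
  rw [Subgroup.coe_mul, mul_assoc, hfk, map_mul]
  simp only [mul_inv_rev, Units.val_mul, Units.val_inv_eq_inv_val]
  field_simp

theorem averaging_mem_ind (hS : Subgroup.IsComplement (N.subgroupOf H : Set ↥H) (S : Set ↥H))
    {f : G → R} (hf : f ∈ Ind R N (χ.comp (Subgroup.inclusion hNH))) :
    averaging χ S f ∈ Ind R H χ := by
  refine ⟨fun h g => ?_, ?_⟩
  · have key := hS.sum_comp_mul_right (φ := fun u : ↥H => (((χ u)⁻¹ : Rˣ) : R) * f (↑u * g))
      (inv_char_mul_apply_mul_of_mem_ind hNH hf g) h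
    beta_reduce at key
    rw [averaging_apply, averaging_apply, ← key, Finset.mul_sum, Finset.mul_sum, Finset.mul_sum]
    refine Finset.sum_congr rfl fun s _ => ?_
    simp only [Units.val_inv_eq_inv_val, map_mul, mul_inv_rev, Units.val_mul, Subgroup.coe_mul,
      mul_assoc]
    field_simp
  · obtain ⟨T, hT⟩ := hf.2
    refine ⟨T, fun g hg => ?_⟩
    obtain ⟨s, -, hs⟩ := Finset.exists_ne_zero_of_sum_ne_zero (right_ne_zero_of_mul hg)
    obtain ⟨t, ht, n, hn⟩ := hT _ (right_ne_zero_of_mul hs)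
    refine ⟨t, ht, s⁻¹ * Subgroup.inclusion hNH n, ?_⟩
    simp [mul_assoc, ← hn]

theorem averaging_comp_mul_left [(N.subgroupOf H).Normal]
    (hS : Subgroup.IsComplement (N.subgroupOf H : Set ↥H) (S : Set ↥H))
    {f : G → R} (hf : f ∈ Ind R N (χ.comp (Subgroup.inclusion hNH))) (h : ↥H) :
    averaging χ S (fun g => f ((h : G)⁻¹ * g)) = (((χ h)⁻¹ : Rˣ) : R) • averaging χ S f := by
  ext g
  have key := hS.sum_comp_mul_left (φ := fun u : ↥H => (((χ u)⁻¹ : Rˣ) : R) * f (↑u * g))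
    (inv_char_mul_apply_mul_of_mem_ind hNH hf g) h⁻¹
  beta_reduce at key
  rw [Pi.smul_apply, smul_eq_mul, averaging_apply, averaging_apply, ← key, Finset.mul_sum,
    Finset.mul_sum, Finset.mul_sum]
  refine Finset.sum_congr rfl fun s _ => ?_
  simp only [Units.val_inv_eq_inv_val, map_mul, map_inv, mul_inv_rev, inv_inv, Units.val_mul,
    Subgroup.coe_mul, InvMemClass.coe_inv, mul_assoc]
  field_simp

theorem ind_le_ind_comp_inclusion
    (hS : Subgroup.IsComplement (N.subgroupOf H : Set ↥H) (S : Set ↥H)) :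
    Ind R H χ ≤ Ind R N (χ.comp (Subgroup.inclusion hNH)) := by
  classical
  rintro F ⟨hFH, T, hT⟩
  refine ⟨fun n g => hFH (Subgroup.inclusion hNH n) g,
    Finset.image₂ (fun (s : ↥H) (t : G) => (s : G) * t) S T, fun g hg => ?_⟩
  obtain ⟨t, ht, h, rfl⟩ := hT g hg
  have hn := hS.mul_inv_toRightFun_mem h
  refine ⟨_, Finset.mem_image₂_of_mem (hS.toRightFun h).2 ht,
    ⟨_, Subgroup.mem_subgroupOf.1 hn⟩, ?_⟩
  simp [mul_assoc]

theorem leftAugmentation_le_ker_averaging [(N.subgroupOf H).Normal]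
    (hS : Subgroup.IsComplement (N.subgroupOf H : Set ↥H) (S : Set ↥H)) :
    leftAugmentation N H hNH χ ≤ LinearMap.ker (averaging χ S) := by
  rw [leftAugmentation, Submodule.span_le]
  rintro _ ⟨h, f, hf, rfl⟩
  simp [averaging_comp_mul_left hNH hS hf h]

theorem averaging_sub_self_mem_leftAugmentation (hcard : (S.card : R) ≠ 0) {f : G → R}
    (hf : f ∈ Ind R N (χ.comp (Subgroup.inclusion hNH))) :
    averaging χ S f - f ∈ leftAugmentation N H hNH χ := by
  have hsum : averaging χ S f - f = ∑ s ∈ S, ((S.card : R)⁻¹ * (((χ s)⁻¹ : Rˣ) : R)) •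
      ((fun g => f (((s⁻¹ : ↥H) : G)⁻¹ * g)) - (((χ s⁻¹)⁻¹ : Rˣ) : R) • f) := by
    ext g
    have hterm : ∀ s ∈ S, ((S.card : R)⁻¹ * (((χ s)⁻¹ : Rˣ) : R)) *
        (f (((s⁻¹ : ↥H) : G)⁻¹ * g) - (((χ s⁻¹)⁻¹ : Rˣ) : R) * f g) =
        (S.card : R)⁻¹ * ((((χ s)⁻¹ : Rˣ) : R) * f (↑s * g)) - (S.card : R)⁻¹ * f g :=
      fun s _ => by
        simp only [Units.val_inv_eq_inv_val, InvMemClass.coe_inv, inv_inv, map_inv]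
        field_simp
    simp only [Pi.sub_apply, Finset.sum_apply, Pi.smul_apply, smul_eq_mul]
    rw [Finset.sum_congr rfl hterm, Finset.sum_sub_distrib, ← Finset.mul_sum, Finset.sum_const,
      nsmul_eq_mul, mul_inv_cancel_left₀ hcard, averaging_apply]
  rw [hsum]
  exact Submodule.sum_mem _ fun s _ =>
    Submodule.smul_mem _ _ (Submodule.subset_span ⟨s⁻¹, f, hf, rfl⟩)

end Averaging

/-- with `N ⊴ H ≤ G`, `[H:N]` finite and invertible in the field `R`, the kernel
of the averaging map `q : ind_N^G(χ|_N) → ind_H^G(χ)` is exactly the `(λ, χ⁻¹)`-augmentation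
submodule, so `q` induces an isomorphism `(ind_N^G(χ|_N))_{λ,χ⁻¹} ≅ ind_H^G(χ)`. -/
theorem averaging_kernel_is_augmentation
    {G R : Type*} [Group G] [Field R] (N H : Subgroup G) (hNH : N ≤ H)
    (hnorm : (N.subgroupOf H).Normal)
    (χ : ↥H →* Rˣ) (S : Finset ↥H)
    (hS : ∀ h : ↥H, ∃! s : ↥H, s ∈ S ∧ ∃ n ∈ N, (h : G) = n * ↑s)
    (hcard : (S.card : R) ≠ 0)
    (q : (G → R) → (G → R))
    (hq : ∀ f g, q f g = (S.card : R)⁻¹ *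
      ∑ s ∈ S, (((χ s)⁻¹ : Rˣ) : R) * f (↑s * g)) :
    (∀ f ∈ Ind R N (χ.comp (Subgroup.inclusion hNH)),
      (q f = 0 ↔ f ∈ leftAugmentation N H hNH χ)) ∧
    ∃ e : (↥(Ind R N (χ.comp (Subgroup.inclusion hNH))) ⧸
        (leftAugmentation N H hNH χ).comap
          (Ind R N (χ.comp (Subgroup.inclusion hNH))).subtype) ≃ₗ[R] ↥(Ind R H χ),
      ∀ f : ↥(Ind R N (χ.comp (Subgroup.inclusion hNH))),
        ((e (Submodule.Quotient.mk f) : G → R)) = q ↑f := by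
  obtain rfl : q = averaging χ S := funext fun f => funext (hq f)
  have hT := isComplement_subgroupOf_of_existsUnique hS
  have hker : ∀ f ∈ Ind R N (χ.comp (Subgroup.inclusion hNH)),
      averaging χ S f = 0 ↔ f ∈ leftAugmentation N H hNH χ := fun f hf =>
    ⟨fun h0 => by simpa [h0] using averaging_sub_self_mem_leftAugmentation hNH hcard hf,
      fun hA => leftAugmentation_le_ker_averaging hNH hT hA⟩
  let p := ((averaging χ S).comp (Ind R N (χ.comp (Subgroup.inclusion hNH))).subtype).codRestrict
    (Ind R H χ) fun f => averaging_mem_ind hNH hT f.2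
  have hp : Function.Surjective p := fun F =>
    ⟨⟨F, ind_le_ind_comp_inclusion hNH hT F.2⟩,
      Subtype.ext (averaging_eq_self_of_mem_ind hcard F.2)⟩
  have hkerp : LinearMap.ker p = (leftAugmentation N H hNH χ).comap
      (Ind R N (χ.comp (Subgroup.inclusion hNH))).subtype := by
    ext f
    simp [p, hker f f.2]
  exact ⟨hker, (Submodule.quotEquivOfEq _ _ hkerp.symm).trans (p.quotKerEquivOfSurjective hp),
    fun f => rfl⟩
end
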